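/- arXiv:0806.2491 — 4 statements merged into one kernel-verified Lean document; each statement's English description precedes it below -/
import Mathlib

section
/- Let q, a, b ∈ ℂ with |q| < 1, q ≠ 0, and suppose a q^j ≠ 1 and b q^j ≠ 1 for all integers j ≥ 0. Fix an integer n ≥ 0 and assume additionally a b q^{2n-1} ≠ 1 and a b q^{2n+1} ≠ 1. Define D_n(x) = (q;q)_∞ (x;q)_∞ (b;q)_∞ · (x b q^{n-1};q)_n q^n / ((q;q)_n (x;q)_n (b;q)_n), and define z_m = − a q^m (1 − q^m)(1 − b q^{m-1}) (a b q^m;q)_m (q;q)_∞ (a;q)_∞ (b;q)_∞ / ((1 − a q^m)(1 − a b q^{2m-1}) (q;q)_m (a;q)_m (b;q)_m) for m ∈ {n, n+1}. Then the telescoping identity D_n(a) − (1 − a) D_n(a q) − a q · D_n(a q²) = z_{n+1} − z_n holds. -/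
/-- The finite q-shifted factorial `(a;q)_n = ∏_{j=0}^{n-1} (1 - a q^j)`. -/
noncomputable def qPoch (q a : ℂ) (n : ℕ) : ℂ := ∏ j ∈ Finset.range n, (1 - a * q ^ j)

/-- The infinite q-shifted factorial `(a;q)_∞ = ∏_{j=0}^{∞} (1 - a q^j)`. -/
noncomputable def qPochInf (q a : ℂ) : ℂ := ∏' j : ℕ, (1 - a * q ^ j)

/-- The summand `D_n(x) = (q,x,b;q)_∞ (x b q^{n-1};q)_n q^n / ((q,x,b;q)_n)`. -/
noncomputable def D₁ (q b : ℂ) (n : ℕ) (x : ℂ) : ℂ :=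
  qPochInf q q * qPochInf q x * qPochInf q b *
    (qPoch q (x * b * q ^ ((n : ℤ) - 1)) n * q ^ n /
      (qPoch q q n * qPoch q x n * qPoch q b n))

/-- The certificate
`z_m = - a q^m (1-q^m)(1-b q^{m-1})(a b q^m;q)_m (q,a,b;q)_∞ / ((1-a q^m)(1-a b q^{2m-1})(q,a,b;q)_m)`. -/
noncomputable def z₁ (q a b : ℂ) (m : ℕ) : ℂ :=
  -(a * q ^ m * (1 - q ^ m) * (1 - b * q ^ ((m : ℤ) - 1)) * qPoch q (a * b * q ^ m) m *
      (qPochInf q q * qPochInf q a * qPochInf q b)) /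
    ((1 - a * q ^ m) * (1 - a * b * q ^ (2 * (m : ℤ) - 1)) *
      (qPoch q q m * qPoch q a m * qPoch q b m))

/-!
Splitting off the first `n` factors, `(x;q)_∞ = (x;q)_n (x q^n;q)_∞`, turns `D_n(x)` and `z_m`
into products of tails of the infinite products and a single finite product. In this form
`z_{n+1} = -a q D_n(a q²)` only needs the one-step shift `(y;q)_∞ = (1 - y) (y q;q)_∞` of the tails,
and `D_n(a) - (1 - a) D_n(a q) = -z_n` reduces to the two-term identity
`(1 - a q^n)(1 - a b q^{n-1}) - (1 - a)(1 - a b q^{2n-1}) = a (1 - q^n)(1 - b q^{n-1})`.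
-/

lemma qPoch_succ (q x : ℂ) (n : ℕ) : qPoch q x (n + 1) = qPoch q x n * (1 - x * q ^ n) :=
  Finset.prod_range_succ _ n

lemma qPoch_succ' (q x : ℂ) (n : ℕ) : qPoch q x (n + 1) = (1 - x) * qPoch q (x * q) n := by
  rw [qPoch, Finset.prod_range_succ', pow_zero, mul_one, mul_comm]
  exact congrArg _ (Finset.prod_congr rfl fun j _ => by ring)

lemma qPoch_mul_one_sub (q x : ℂ) (n : ℕ) :
    qPoch q x n * (1 - x * q ^ n) = (1 - x) * qPoch q (x * q) n := by
  rw [← qPoch_succ, qPoch_succ']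

lemma zpow_natCast_sub_one_mul {G₀ : Type*} [GroupWithZero G₀] {q : G₀} (hq0 : q ≠ 0) (n : ℕ) :
    q ^ ((n : ℤ) - 1) * q = q ^ n := by
  rw [← zpow_add_one₀ hq0, sub_add_cancel, zpow_natCast]

lemma mul_pow_ne_one_of_norm_lt_one {𝕜 : Type*} [NormedDivisionRing 𝕜] {q : 𝕜} (hq : ‖q‖ < 1)
    (j : ℕ) : q * q ^ j ≠ 1 := by
  intro h
  have : ‖q‖ ^ (j + 1) < 1 := pow_lt_one₀ (norm_nonneg q) hq (Nat.succ_ne_zero j)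
  rw [← norm_pow, pow_succ', h, norm_one] at this
  exact lt_irrefl _ this

variable {q : ℂ}

lemma qPoch_ne_zero {x : ℂ} (hx : ∀ j, x * q ^ j ≠ 1) (n : ℕ) : qPoch q x n ≠ 0 :=
  Finset.prod_ne_zero_iff.mpr fun j _ => sub_ne_zero.mpr (hx j).symm

lemma multipliable_one_sub_mul_pow (hq : ‖q‖ < 1) (x : ℂ) :
    Multipliable fun j : ℕ => 1 - x * q ^ j := by
  have hsum : Summable fun j : ℕ => -(x * q ^ j) :=
    ((summable_geometric_of_norm_lt_one hq).mul_left x).neg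
  simpa only [sub_eq_add_neg] using Complex.multipliable_one_add_of_summable hsum

lemma qPochInf_eq_qPoch_mul (hq : ‖q‖ < 1) (x : ℂ) (n : ℕ) :
    qPochInf q x = qPoch q x n * qPochInf q (x * q ^ n) := by
  have htail : Multipliable fun j : ℕ => 1 - x * q ^ (j + n) :=
    (multipliable_one_sub_mul_pow hq (x * q ^ n)).congr fun j => by ring
  rw [qPochInf, qPochInf, qPoch,
    ← Multipliable.prod_mul_tprod_nat_mul' (f := fun j => 1 - x * q ^ j) htail]
  exact congrArg _ (tprod_congr fun j => by ring)

lemma qPochInf_mul_pow_eq_one_sub_mul (hq : ‖q‖ < 1) (x : ℂ) (k : ℕ) :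
    qPochInf q (x * q ^ k) = (1 - x * q ^ k) * qPochInf q (x * q ^ (k + 1)) := by
  rw [qPochInf_eq_qPoch_mul hq _ 1, qPoch, Finset.prod_range_one, pow_zero, mul_one, pow_one,
    mul_assoc, ← pow_succ]

lemma D₁_eq_tails (hq : ‖q‖ < 1) {b x : ℂ} {n : ℕ} (hx : qPoch q x n ≠ 0)
    (hb : qPoch q b n ≠ 0) :
    D₁ q b n x = q ^ n * qPochInf q (q * q ^ n) * qPochInf q (b * q ^ n) *
      (qPochInf q (x * q ^ n) * qPoch q (x * b * q ^ ((n : ℤ) - 1)) n) := by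
  have hqn := qPoch_ne_zero (mul_pow_ne_one_of_norm_lt_one hq) n
  rw [D₁, qPochInf_eq_qPoch_mul hq q n, qPochInf_eq_qPoch_mul hq x n,
    qPochInf_eq_qPoch_mul hq b n]
  field_simp

lemma z₁_eq_tails (hq : ‖q‖ < 1) {a b : ℂ} {m : ℕ} (ha : qPoch q a (m + 1) ≠ 0)
    (hb : qPoch q b m ≠ 0) :
    z₁ q a b m = -(a * q ^ m * (1 - q ^ m) * (1 - b * q ^ ((m : ℤ) - 1)) *
      qPoch q (a * b * q ^ m) m *
        (qPochInf q (q * q ^ m) * qPochInf q (a * q ^ (m + 1)) * qPochInf q (b * q ^ m))) /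
      (1 - a * b * q ^ (2 * (m : ℤ) - 1)) := by
  have hqm := qPoch_ne_zero (mul_pow_ne_one_of_norm_lt_one hq) m
  obtain ⟨ha, ham⟩ := mul_ne_zero_iff.mp (qPoch_succ q a m ▸ ha)
  rw [z₁, qPochInf_eq_qPoch_mul hq q m, qPochInf_eq_qPoch_mul hq a (m + 1),
    qPochInf_eq_qPoch_mul hq b m, qPoch_succ]
  field_simp

lemma z₁_succ_eq_neg_mul_D₁ (hq : ‖q‖ < 1) (hq0 : q ≠ 0) {a b : ℂ} (ha : ∀ j : ℕ, a * q ^ j ≠ 1)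
    (hb : ∀ j : ℕ, b * q ^ j ≠ 1) (n : ℕ) (h : a * b * q ^ (2 * (n : ℤ) + 1) ≠ 1) :
    z₁ q a b (n + 1) = -(a * q * D₁ q b n (a * q ^ 2)) := by
  have haq2 : ∀ j : ℕ, a * q ^ 2 * q ^ j ≠ 1 := fun j => by
    simpa only [mul_assoc, ← pow_add] using ha (2 + j)
  have harg : a * q ^ 2 * b * q ^ ((n : ℤ) - 1) = a * b * q ^ (n + 1) := by
    rw [pow_succ q n, ← zpow_natCast_sub_one_mul hq0 n]
    ring
  have hexp_b : q ^ (((n + 1 : ℕ) : ℤ) - 1) = q ^ n := by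
    rw [Nat.cast_succ, add_sub_cancel_right, zpow_natCast]
  have hexp_ab : q ^ (2 * ((n + 1 : ℕ) : ℤ) - 1) = q ^ (n + 1) * q ^ n := by
    rw [← pow_add, ← zpow_natCast]
    congr 1
    push_cast
    ring
  have hab : 1 - a * b * q ^ (n + 1) * q ^ n ≠ 0 := by
    refine sub_ne_zero.mpr (Ne.symm ?_)
    rw [mul_assoc _ (q ^ (n + 1)), ← hexp_ab]
    convert h using 4
    push_cast
    ring
  rw [z₁_eq_tails hq (qPoch_ne_zero ha _) (qPoch_ne_zero hb _),
    D₁_eq_tails hq (qPoch_ne_zero haq2 n) (qPoch_ne_zero hb n), harg, hexp_b, hexp_ab,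
    qPochInf_mul_pow_eq_one_sub_mul hq q n, qPochInf_mul_pow_eq_one_sub_mul hq b n,
    show a * q ^ 2 * q ^ n = a * q ^ (n + 1 + 1) by ring, qPoch_succ,
    ← mul_assoc (a * b), div_eq_iff hab]
  ring

lemma D₁_sub_one_sub_mul_D₁ (hq : ‖q‖ < 1) (hq0 : q ≠ 0) {a b : ℂ} (ha : ∀ j : ℕ, a * q ^ j ≠ 1)
    (hb : ∀ j : ℕ, b * q ^ j ≠ 1) (n : ℕ) (h : a * b * q ^ (2 * (n : ℤ) - 1) ≠ 1) :
    D₁ q b n a - (1 - a) * D₁ q b n (a * q) = -z₁ q a b n := by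
  have haq : ∀ j : ℕ, a * q * q ^ j ≠ 1 := fun j => by
    simpa only [mul_assoc, ← pow_succ'] using ha (j + 1)
  have hr := zpow_natCast_sub_one_mul hq0 n
  have hexp_ab : q ^ (2 * (n : ℤ) - 1) = q ^ ((n : ℤ) - 1) * q ^ n := by
    rw [← zpow_natCast, ← zpow_add₀ hq0]
    congr 1
    ring
  have hab : 1 - a * b * (q ^ ((n : ℤ) - 1) * q ^ n) ≠ 0 :=
    sub_ne_zero.mpr (Ne.symm (hexp_ab ▸ h))
  have hC := qPoch_mul_one_sub q (a * b * q ^ ((n : ℤ) - 1)) n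
  rw [mul_assoc (a * b) _ q, hr] at hC
  rw [D₁_eq_tails hq (qPoch_ne_zero ha n) (qPoch_ne_zero hb n),
    D₁_eq_tails hq (qPoch_ne_zero haq n) (qPoch_ne_zero hb n),
    z₁_eq_tails hq (qPoch_ne_zero ha _) (qPoch_ne_zero hb n), hexp_ab,
    qPochInf_mul_pow_eq_one_sub_mul hq a n, show a * q * q ^ n = a * q ^ (n + 1) by ring,
    show a * q * b * q ^ ((n : ℤ) - 1) = a * b * q ^ n by rw [← hr]; ring, neg_div, neg_neg,
    eq_div_iff hab]
  linear_combination (q ^ n * qPochInf q (q * q ^ n) * qPochInf q (b * q ^ n) * (1 - a * q ^ n) *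
    qPochInf q (a * q ^ (n + 1))) * hC

/-- The telescoping identity (2.6):
`D_n(a) - (1-a) D_n(aq) - aq D_n(aq²) = z_{n+1} - z_n`. -/
theorem telescoping_identity_one (q a b : ℂ) (hq : ‖q‖ < 1) (hq0 : q ≠ 0)
    (ha : ∀ j : ℕ, a * q ^ j ≠ 1) (hb : ∀ j : ℕ, b * q ^ j ≠ 1) (n : ℕ)
    (h1 : a * b * q ^ (2 * (n : ℤ) - 1) ≠ 1) (h2 : a * b * q ^ (2 * (n : ℤ) + 1) ≠ 1) :
    D₁ q b n a - (1 - a) * D₁ q b n (a * q) - a * q * D₁ q b n (a * q ^ 2) =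
      z₁ q a b (n + 1) - z₁ q a b n := by
  linear_combination D₁_sub_one_sub_mul_D₁ hq hq0 ha hb n h1 -
    z₁_succ_eq_neg_mul_D₁ hq hq0 ha hb n h2
end

section
/- Let q, a ∈ ℂ with |q| < 1. Define a sequence (A_n)_{n≥0} of complex numbers by A_0 = 1 − a, A_1 = (1 − a)(1 − a q) + a q, and A_{n+1} = (1 − a q^{n+1}) A_n + a q^{n+1} A_{n-1} for n ≥ 1. Then for every n ≥ 0 one has A_{n+1} − A_n = (−1)^n a^n q^{n(n+3)/2} (A_1 − A_0), and consequently the sequence (A_n) converges (to a finite limit in ℂ). -/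
/-! The recurrence can be rewritten as
`A (n+2) - A (n+1) = -(a q^(n+2)) (A (n+1) - A n)`, so the successive differences form a
first-order product recurrence; multiplying out the factors gives the closed formula, with
exponent `2 + 3 + ⋯ + (n+1) = n(n+3)/2`. Since the ratio `a q^(n+2)` tends to `0`, the ratio
test makes the differences summable, hence `A` is Cauchy and converges in `ℂ`. -/

open Filter Topology

section RatioTest

variable {E : Type*} [SeminormedAddCommGroup E]

theorem summable_norm_of_norm_succ_le_mul {d : ℕ → E} {c : ℕ → ℝ}
    (hc : Tendsto c atTop (𝓝 0)) (h : ∀ n, ‖d (n + 1)‖ ≤ c n * ‖d n‖) :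
    Summable fun n => ‖d n‖ := by
  refine summable_of_ratio_norm_eventually_le (r := 1 / 2) (by norm_num) ?_
  filter_upwards [hc.eventually_le_const (by norm_num : (0 : ℝ) < 1 / 2)] with n hn
  simp only [norm_norm]
  exact (h n).trans (mul_le_mul_of_nonneg_right hn (norm_nonneg _))

theorem cauchySeq_of_norm_sub_succ_le_mul {A : ℕ → E} {c : ℕ → ℝ}
    (hc : Tendsto c atTop (𝓝 0))
    (h : ∀ n, ‖A (n + 2) - A (n + 1)‖ ≤ c n * ‖A (n + 1) - A n‖) : CauchySeq A :=
  cauchySeq_of_summable_dist <| by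
    simpa only [dist_eq_norm', Nat.succ_eq_add_one] using
      summable_norm_of_norm_succ_le_mul (d := fun n => A (n + 1) - A n) hc h

end RatioTest

theorem Nat.succ_mul_add_three_div_two (n : ℕ) :
    (n + 1) * (n + 1 + 3) / 2 = n * (n + 3) / 2 + (n + 2) := by
  rw [show (n + 1) * (n + 1 + 3) = n * (n + 3) + (n + 2) * 2 by ring,
    Nat.add_mul_div_right _ _ two_pos]

section QRecurrence

variable {q a : ℂ} {A : ℕ → ℂ}
  (hrec : ∀ n : ℕ, 1 ≤ n →
    A (n + 1) = (1 - a * q ^ (n + 1)) * A n + a * q ^ (n + 1) * A (n - 1))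
include hrec

theorem sub_succ_succ_eq_neg_mul_sub_succ (n : ℕ) :
    A (n + 2) - A (n + 1) = -(a * q ^ (n + 2)) * (A (n + 1) - A n) := by
  rw [hrec (n + 1) n.succ_pos, Nat.add_sub_cancel]
  ring

theorem sub_succ_eq_closed_form (n : ℕ) :
    A (n + 1) - A n = (-1 : ℂ) ^ n * a ^ n * q ^ (n * (n + 3) / 2) * (A 1 - A 0) := by
  induction n with
  | zero => simp
  | succ n ih =>
    rw [sub_succ_succ_eq_neg_mul_sub_succ hrec, ih, Nat.succ_mul_add_three_div_two]
    ring

theorem cauchySeq_of_norm_q_lt_one (hq : ‖q‖ < 1) : CauchySeq A := by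
  have hratio : Tendsto (fun n : ℕ => ‖a‖ * ‖q‖ ^ (n + 2)) atTop (𝓝 0) := by
    simpa using ((tendsto_pow_atTop_nhds_zero_of_lt_one (norm_nonneg q) hq).comp
      (tendsto_add_atTop_nat 2)).const_mul ‖a‖
  refine cauchySeq_of_norm_sub_succ_le_mul hratio fun n => le_of_eq ?_
  rw [sub_succ_succ_eq_neg_mul_sub_succ hrec, norm_mul, norm_neg, norm_mul, norm_pow]

end QRecurrence

theorem A_seq_converges_general (q a : ℂ) (hq : ‖q‖ < 1) (A : ℕ → ℂ)
    (hrec : ∀ n : ℕ, 1 ≤ n →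
      A (n + 1) = (1 - a * q ^ (n + 1)) * A n + a * q ^ (n + 1) * A (n - 1)) :
    (∀ n : ℕ, A (n + 1) - A n =
      (-1 : ℂ) ^ n * a ^ n * q ^ (n * (n + 3) / 2) * (A 1 - A 0)) ∧
    ∃ L : ℂ, Filter.Tendsto A Filter.atTop (nhds L) :=
  ⟨sub_succ_eq_closed_form hrec, cauchySeq_tendsto_of_complete (cauchySeq_of_norm_q_lt_one hrec hq)⟩

/-- The difference formula and convergence for the coefficient sequence `A_n`
arising from iterating `H(a) = (1-a) H(aq) + aq H(aq²)`. -/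
theorem A_seq_converges (q a : ℂ) (hq : ‖q‖ < 1) (A : ℕ → ℂ)
    (hA0 : A 0 = 1 - a) (hA1 : A 1 = (1 - a) * (1 - a * q) + a * q)
    (hrec : ∀ n : ℕ, 1 ≤ n →
      A (n + 1) = (1 - a * q ^ (n + 1)) * A n + a * q ^ (n + 1) * A (n - 1)) :
    (∀ n : ℕ, A (n + 1) - A n =
      (-1 : ℂ) ^ n * a ^ n * q ^ (n * (n + 3) / 2) * (A 1 - A 0)) ∧
    ∃ L : ℂ, Filter.Tendsto A Filter.atTop (nhds L) :=
  A_seq_converges_general q a hq A hrec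
end

section
/- Let q, a, b ∈ ℂ with |q| < 1, and define f(a) = 1 + ∑_{n=1}^∞ (-1)^n q^{n(n-1)/2} (a^n + b^n) (an absolutely convergent series). Then (1 + a q)·f(a) − (1 − a² q)·f(a q) − (a q + a² q)·f(a q²) = (q − 1)·a. -/
/-!
Writing `θ(x) = ∑ₙ q^(n choose 2) xⁿ` for the partial theta function, `f(a) = θ(-a) + θ(-b) - 1`.
The coefficients on the left-hand side sum to zero, so the `b`-part cancels, and the identity
follows from two instances of `θ(x) = 1 + x θ(q x)`, at `x = -a` and `x = -a q`.
-/

open Filter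

/-- `f(a) = 1 + ∑_{n=1}^∞ (-1)^n q^{n(n-1)/2} (a^n + b^n)` (with `b` held fixed). -/
noncomputable def f₂ (q b a : ℂ) : ℂ :=
  1 + ∑' n : ℕ, (-1 : ℂ) ^ (n + 1) * q ^ ((n + 1) * n / 2) * (a ^ (n + 1) + b ^ (n + 1))

noncomputable def partialTheta (q x : ℂ) : ℂ :=
  ∑' n : ℕ, q ^ n.choose 2 * x ^ n

section PartialTheta

variable {q : ℂ}

lemma summable_partialTheta (hq : ‖q‖ < 1) (x : ℂ) :
    Summable fun n : ℕ ↦ q ^ n.choose 2 * x ^ n := by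
  refine summable_of_ratio_norm_eventually_le (r := 1 / 2) (by norm_num) ?_
  have hratio : Tendsto (fun n : ℕ ↦ ‖q‖ ^ n * ‖x‖) atTop (nhds 0) := by
    simpa using (tendsto_pow_atTop_nhds_zero_of_lt_one (norm_nonneg q) hq).mul_const ‖x‖
  filter_upwards [hratio.eventually (ge_mem_nhds (by norm_num : (0 : ℝ) < 1 / 2))] with n hn
  calc ‖q ^ (n + 1).choose 2 * x ^ (n + 1)‖
      = (‖q‖ ^ n * ‖x‖) * ‖q ^ n.choose 2 * x ^ n‖ := by
        simp only [Nat.choose_succ_succ', Nat.choose_one_right, pow_add, pow_succ, norm_mul,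
          norm_pow]
        ring
    _ ≤ 1 / 2 * ‖q ^ n.choose 2 * x ^ n‖ := by gcongr

lemma partialTheta_eq_one_add_tsum (hq : ‖q‖ < 1) (x : ℂ) :
    partialTheta q x = 1 + ∑' n : ℕ, q ^ (n + 1).choose 2 * x ^ (n + 1) := by
  rw [partialTheta, (summable_partialTheta hq x).tsum_eq_zero_add]
  simp

lemma partialTheta_eq_one_add_mul (hq : ‖q‖ < 1) (x : ℂ) :
    partialTheta q x = 1 + x * partialTheta q (q * x) := by
  rw [partialTheta_eq_one_add_tsum hq, partialTheta, ← tsum_mul_left]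
  congr 1
  refine tsum_congr fun n ↦ ?_
  rw [Nat.choose_succ_succ', Nat.choose_one_right]
  ring

end PartialTheta

lemma f₂_eq_partialTheta {q : ℂ} (hq : ‖q‖ < 1) (b x : ℂ) :
    f₂ q b x = partialTheta q (-x) + (partialTheta q (-b) - 1) := by
  have hshift (y : ℂ) : Summable fun n : ℕ ↦ q ^ (n + 1).choose 2 * y ^ (n + 1) :=
    (summable_nat_add_iff 1).mpr (summable_partialTheta hq y)
  rw [f₂, partialTheta_eq_one_add_tsum hq, partialTheta_eq_one_add_tsum hq,
    add_sub_cancel_left, add_assoc, ← (hshift _).tsum_add (hshift _)]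
  congr 1
  refine tsum_congr fun n ↦ ?_
  rw [Nat.choose_two_right, Nat.add_sub_cancel, neg_pow, neg_pow]
  ring

/-- The inhomogeneous functional equation (2.11):
`(1+aq) f(a) - (1-a²q) f(aq) - (aq+a²q) f(aq²) = (q-1) a`. -/
theorem f_funcEq (q a b : ℂ) (hq : ‖q‖ < 1) :
    (1 + a * q) * f₂ q b a - (1 - a ^ 2 * q) * f₂ q b (a * q)
      - (a * q + a ^ 2 * q) * f₂ q b (a * q ^ 2) = (q - 1) * a := by
  have h₀ : partialTheta q (-a) = 1 + (-a) * partialTheta q (-(a * q)) := by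
    rw [partialTheta_eq_one_add_mul hq]; ring_nf
  have h₁ : partialTheta q (-(a * q)) = 1 + (-(a * q)) * partialTheta q (-(a * q ^ 2)) := by
    rw [partialTheta_eq_one_add_mul hq]; ring_nf
  simp only [f₂_eq_partialTheta hq]
  linear_combination (1 + a * q) * h₀ - (1 + a) * h₁
end

section
/- Let q, a ∈ ℂ with |q| < 1, and suppose 1 + a q^n ≠ 0 for every integer n ≥ 1. Define a sequence (A_n)_{n≥0} by A_0 = (1 − a² q)/(1 + a q), A_1 = (1 − a² q³)(1 − a² q)/((1 + a q)(1 + a q²)) + (a q + a² q)/(1 + a q), and A_{n+1} = ((1 − a² q^{2n+3})/(1 + a q^{n+2}))·A_n + ((a q^{n+1} + a² q^{2n+1})/(1 + a q^{n+1}))·A_{n-1} for n ≥ 1. Then the sequence (A_n) converges (to a finite limit in ℂ). -/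
/-!
Writing the recurrence as `A (n + 2) = (1 + u n) A (n + 1) + v n A n`, both perturbations
`u n` and `v n` are `O(|q|ⁿ)`, hence absolutely summable. The discrete Grönwall inequality
applied to `max ‖A n‖ ‖A (n + 1)‖` then bounds the sequence, and with a bound `M` the increments
`A (n + 2) - A (n + 1) = u n A (n + 1) + v n A n` are dominated by the summable
`(‖u n‖ + ‖v n‖) M`, so the sequence is Cauchy.
-/

open Filter Topology Asymptotics Finset

section Recurrence

variable {𝕜 E : Type*} [NormedField 𝕜] [NormedAddCommGroup E] [NormedSpace 𝕜 E]
  {x : ℕ → E} {u v : ℕ → 𝕜}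

theorem exists_norm_le_of_second_order_recurrence (hu : Summable (‖u ·‖))
    (hv : Summable (‖v ·‖)) (hx : ∀ n, x (n + 2) = (1 + u n) • x (n + 1) + v n • x n) :
    ∃ M, ∀ n, ‖x n‖ ≤ M := by
  set m : ℕ → ℝ := fun n => max ‖x n‖ ‖x (n + 1)‖
  have hstep : ∀ n ≥ 0, m (n + 1) ≤ (1 + (‖u n‖ + ‖v n‖)) * m n + 0 := by
    intro n _
    have hm : 0 ≤ m n := (norm_nonneg _).trans (le_max_left _ _)
    have hnext : ‖x (n + 2)‖ ≤ (1 + (‖u n‖ + ‖v n‖)) * m n :=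
      calc ‖x (n + 2)‖ ≤ ‖1 + u n‖ * ‖x (n + 1)‖ + ‖v n‖ * ‖x n‖ := by
            rw [hx, ← norm_smul, ← norm_smul]
            exact norm_add_le _ _
        _ ≤ (1 + ‖u n‖) * m n + ‖v n‖ * m n := by
            gcongr
            · exact (norm_add_le _ _).trans_eq (by rw [norm_one])
            · exact le_max_right _ _
            · exact le_max_left _ _
        _ = (1 + (‖u n‖ + ‖v n‖)) * m n := by ring
    have hprev : ‖x (n + 1)‖ ≤ (1 + (‖u n‖ + ‖v n‖)) * m n :=
      calc ‖x (n + 1)‖ ≤ m n := le_max_right _ _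
        _ ≤ (1 + (‖u n‖ + ‖v n‖)) * m n :=
          le_mul_of_one_le_left hm (le_add_of_nonneg_right (by positivity))
    exact (max_le hprev hnext).trans_eq (add_zero _).symm
  refine ⟨m 0 * Real.exp (∑' k, (‖u k‖ + ‖v k‖)), fun n => ?_⟩
  calc ‖x n‖ ≤ m n := le_max_left _ _
    _ ≤ (m 0 + ∑ k ∈ Ico 0 n, (0 : ℝ)) * Real.exp (∑ k ∈ Ico 0 n, (‖u k‖ + ‖v k‖)) :=
        discrete_gronwall ((norm_nonneg _).trans (le_max_left _ _)) hstep
          (fun _ _ => by positivity) (fun _ _ => le_rfl) n.zero_le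
    _ ≤ m 0 * Real.exp (∑' k, (‖u k‖ + ‖v k‖)) := by
        rw [sum_const_zero, add_zero]
        gcongr
        exact (hu.add hv).sum_le_tsum _ fun _ _ => by positivity

theorem exists_tendsto_of_second_order_recurrence [CompleteSpace E] (hu : Summable (‖u ·‖))
    (hv : Summable (‖v ·‖)) (hx : ∀ n, x (n + 2) = (1 + u n) • x (n + 1) + v n • x n) :
    ∃ L, Tendsto x atTop (𝓝 L) := by
  obtain ⟨M, hM⟩ := exists_norm_le_of_second_order_recurrence hu hv hx
  have hdist : ∀ n, dist (x (n + 1)) (x (n + 1 + 1)) ≤ (‖u n‖ + ‖v n‖) * M := fun n =>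
    calc dist (x (n + 1)) (x (n + 2)) = ‖u n • x (n + 1) + v n • x n‖ := by
          rw [dist_comm, dist_eq_norm, hx, add_smul, one_smul]
          congr 1
          abel
      _ ≤ ‖u n‖ * M + ‖v n‖ * M := by
          refine (norm_add_le _ _).trans ?_
          rw [norm_smul, norm_smul]
          gcongr <;> exact hM _
      _ = (‖u n‖ + ‖v n‖) * M := by ring
  obtain ⟨L, hL⟩ := cauchySeq_tendsto_of_complete
    (cauchySeq_of_dist_le_of_summable _ hdist ((hu.add hv).mul_right M))
  exact ⟨L, (tendsto_add_atTop_iff_nat 1).mp hL⟩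

end Recurrence

section Asymptotics

variable {ι 𝕜 : Type*} [NormedField 𝕜] {l : Filter ι} {α β : ι → 𝕜} {g : ι → ℝ}

theorem isBigO_const_mul_pow_of_le {q : 𝕜} (hq : ‖q‖ ≤ 1) (c : 𝕜) {e : ℕ → ℕ}
    (he : ∀ n, n ≤ e n) : (fun n => c * q ^ e n) =O[atTop] (fun n => ‖q‖ ^ n) :=
  IsBigO.of_bound ‖c‖ <| Eventually.of_forall fun n => by
    rw [norm_mul, norm_pow, Real.norm_of_nonneg (by positivity)]
    exact mul_le_mul_of_nonneg_left (pow_le_pow_of_le_one (norm_nonneg q) hq (he n)) (norm_nonneg c)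

theorem isBigO_div_one_add (hα : α =O[l] g) (hβ : Tendsto β l (𝓝 0)) :
    (fun i => α i / (1 + β i)) =O[l] g := by
  have hinv : Tendsto (fun i => (1 + β i)⁻¹) l (𝓝 1) := by
    simpa using (tendsto_const_nhds.add hβ).inv₀ (by simp : (1 : 𝕜) + 0 ≠ 0)
  simpa [div_eq_mul_inv] using hα.mul (hinv.isBigO_one ℝ)

theorem isBigO_one_add_div_one_add_sub_one (hα : α =O[l] g) (hβ : β =O[l] g)
    (hβ₀ : Tendsto β l (𝓝 0)) : (fun i => (1 + α i) / (1 + β i) - 1) =O[l] g := by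
  have hne : ∀ᶠ i in l, 1 + β i ≠ 0 := by
    simpa using (tendsto_const_nhds.add hβ₀).eventually_ne (by simp : (1 : 𝕜) + 0 ≠ 0)
  refine (isBigO_div_one_add (hα.sub hβ) hβ₀).congr' (hne.mono fun i hi => ?_) EventuallyEq.rfl
  field_simp
  ring

end Asymptotics

theorem A_seq_converges_two_general (q a : ℂ) (hq : ‖q‖ < 1) (A : ℕ → ℂ)
    (hrec : ∀ n : ℕ, 1 ≤ n →
      A (n + 1) = ((1 - a ^ 2 * q ^ (2 * n + 3)) / (1 + a * q ^ (n + 2))) * A n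
        + ((a * q ^ (n + 1) + a ^ 2 * q ^ (2 * n + 1)) / (1 + a * q ^ (n + 1))) * A (n - 1)) :
    ∃ L : ℂ, Filter.Tendsto A Filter.atTop (nhds L) := by
  have hpow (c : ℂ) (e : ℕ → ℕ) (he : ∀ n, n ≤ e n) := isBigO_const_mul_pow_of_le hq.le c he
  have hg : Tendsto (fun n => ‖q‖ ^ n) atTop (𝓝 0) :=
    tendsto_pow_atTop_nhds_zero_of_lt_one (norm_nonneg q) hq
  have hu : (fun n => (1 - a ^ 2 * q ^ (2 * (n + 1) + 3)) / (1 + a * q ^ (n + 1 + 2)) - 1)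
      =O[atTop] (fun n => ‖q‖ ^ n) := by
    simpa only [neg_mul, ← sub_eq_add_neg] using isBigO_one_add_div_one_add_sub_one
      (hpow (-a ^ 2) (fun n => 2 * (n + 1) + 3) (by omega)) (hpow a (· + 1 + 2) (by omega))
      ((hpow a (· + 1 + 2) (by omega)).trans_tendsto hg)
  have hv : (fun n => (a * q ^ (n + 1 + 1) + a ^ 2 * q ^ (2 * (n + 1) + 1))
      / (1 + a * q ^ (n + 1 + 1))) =O[atTop] (fun n => ‖q‖ ^ n) :=
    isBigO_div_one_add
      ((hpow a (· + 1 + 1) (by omega)).add (hpow (a ^ 2) (fun n => 2 * (n + 1) + 1) (by omega)))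
      ((hpow a (· + 1 + 1) (by omega)).trans_tendsto hg)
  have hgs := summable_geometric_of_lt_one (norm_nonneg q) hq
  refine exists_tendsto_of_second_order_recurrence (summable_of_isBigO_nat hgs hu.norm_left)
    (summable_of_isBigO_nat hgs hv.norm_left) fun n => ?_
  rw [hrec (n + 1) n.succ_pos]
  simp only [smul_eq_mul, add_sub_cancel, Nat.add_sub_cancel]

/-- Convergence of the coefficient sequence `A_n` defined by (2.16), arising from
iterating `H(a) = ((1-a²q)/(1+aq)) H(aq) + ((aq+a²q)/(1+aq)) H(aq²)`. -/
theorem A_seq_converges_two (q a : ℂ) (hq : ‖q‖ < 1)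
    (hden : ∀ n : ℕ, 1 ≤ n → 1 + a * q ^ n ≠ 0) (A : ℕ → ℂ)
    (hA0 : A 0 = (1 - a ^ 2 * q) / (1 + a * q))
    (hA1 : A 1 = (1 - a ^ 2 * q ^ 3) * (1 - a ^ 2 * q) / ((1 + a * q) * (1 + a * q ^ 2))
      + (a * q + a ^ 2 * q) / (1 + a * q))
    (hrec : ∀ n : ℕ, 1 ≤ n →
      A (n + 1) = ((1 - a ^ 2 * q ^ (2 * n + 3)) / (1 + a * q ^ (n + 2))) * A n
        + ((a * q ^ (n + 1) + a ^ 2 * q ^ (2 * n + 1)) / (1 + a * q ^ (n + 1))) * A (n - 1)) :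
    ∃ L : ℂ, Filter.Tendsto A Filter.atTop (nhds L) :=
  A_seq_converges_two_general q a hq A hrec
end
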